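/- arXiv:2204.06046 — 5 statements merged into one kernel-verified Lean document; each statement's English description precedes it below -/
import Mathlib

section
/- Uniqueness of Nash total latency in parallel networks: if f and g are both Nash flows routing demand r in a parallel congestion game with strictly increasing continuous latency functions, then f = g; in particular their total latencies are equal. -/
open Finset

lemma stmt7_aux {E : Type*} [Fintype E]
    (ℓ : E → ℝ → ℝ) (hs : ∀ e, StrictMono (ℓ e))
    (f g : E → ℝ)
    (hf : ∀ e, 0 ≤ f e) (hg : ∀ e, 0 ≤ g e)
    (hsum : ∑ e, f e = ∑ e, g e)
    (hfNash : ∀ e, 0 < f e → ∀ e', ℓ e (f e) ≤ ℓ e' (f e'))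
    (hgNash : ∀ e, 0 < g e → ∀ e', ℓ e (g e) ≤ ℓ e' (g e')) :
    ∀ e, f e ≤ g e := by
  intro e
  by_contra hlt
  push_neg at hlt
  -- exists e' with f e' < g e'
  have hex : ∃ e', f e' < g e' := by
    by_contra h
    push_neg at h
    have : ∑ e, g e < ∑ e, f e :=
      Finset.sum_lt_sum (fun i _ => h i) ⟨e, Finset.mem_univ e, hlt⟩
    linarith
  obtain ⟨e', he'⟩ := hex
  have hfe : 0 < f e := lt_of_le_of_lt (hg e) hlt
  have hge' : 0 < g e' := lt_of_le_of_lt (hf e') he'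
  have h1 : ℓ e' (g e') ≤ ℓ e (g e) := hgNash e' hge' e
  have h2 : ℓ e (g e) < ℓ e (f e) := hs e hlt
  have h3 : ℓ e (f e) ≤ ℓ e' (f e') := hfNash e hfe e'
  have h4 : ℓ e' (f e') < ℓ e' (g e') := hs e' he'
  linarith

/-- uniqueness of Nash flows in parallel networks with strictly
increasing continuous latency functions: any two Nash flows routing demand `r`
coincide; in particular their total latencies agree. -/
theorem stmt7 {E : Type*} [Fintype E]
    (ℓ : E → ℝ → ℝ)
    (hc : ∀ e, Continuous (ℓ e)) (hs : ∀ e, StrictMono (ℓ e))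
    (hn : ∀ e x, 0 ≤ x → 0 ≤ ℓ e x)
    (r : ℝ) (hr : 0 ≤ r)
    (f g : E → ℝ)
    (hf : ∀ e, 0 ≤ f e) (hfr : ∑ e, f e = r)
    (hg : ∀ e, 0 ≤ g e) (hgr : ∑ e, g e = r)
    (hfNash : ∀ e, 0 < f e → ∀ e', ℓ e (f e) ≤ ℓ e' (f e'))
    (hgNash : ∀ e, 0 < g e → ∀ e', ℓ e (g e) ≤ ℓ e' (g e')) :
    f = g ∧ ∑ e, f e * ℓ e (f e) = ∑ e, g e * ℓ e (g e) := by
  have hsum : ∑ e, f e = ∑ e, g e := by rw [hfr, hgr]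
  have h1 := stmt7_aux ℓ hs f g hf hg hsum hfNash hgNash
  have h2 := stmt7_aux ℓ hs g f hg hf hsum.symm hgNash hfNash
  have hfg : f = g := funext fun e => le_antisymm (h1 e) (h2 e)
  exact ⟨hfg, by rw [hfg]⟩
end

section
/- Monotonicity of Nash latency in parallel networks (no Braess paradox): let f be a Nash flow for coefficients α and g a Nash flow for coefficients β in a parallel congestion game, where β_{e,d} ≥ α_{e,d} for all e, d (pointwise larger latencies). Then the common equilibrium latency and the total latency of the Nash flow under β are at least those under α. -/
open Finset

/-- monotonicity of the Nash latency in parallel networks (no Braess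
paradox): if `β ≥ α` pointwise, then both the common equilibrium latency and the
total latency of the Nash flow under `β` are at least those under `α`. -/
theorem stmt8 {E : Type*} [Fintype E] (D : Finset ℕ) (h1D : 1 ∈ D)
    (α β : E → ℕ → ℝ)
    (hα : ∀ e d, 0 ≤ α e d) (hα1 : ∀ e, 0 < α e 1)
    (hle : ∀ e d, α e d ≤ β e d)
    (r : ℝ) (hr : 0 < r)
    (f g : E → ℝ)
    (hf : ∀ e, 0 ≤ f e) (hfr : ∑ e, f e = r)
    (hg : ∀ e, 0 ≤ g e) (hgr : ∑ e, g e = r)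
    (hfNash : ∀ e, 0 < f e → ∀ e',
      ∑ d ∈ D, α e d * f e ^ d ≤ ∑ d ∈ D, α e' d * f e' ^ d)
    (hgNash : ∀ e, 0 < g e → ∀ e',
      ∑ d ∈ D, β e d * g e ^ d ≤ ∑ d ∈ D, β e' d * g e' ^ d) :
    (∀ e e', 0 < f e → 0 < g e' →
      ∑ d ∈ D, α e d * f e ^ d ≤ ∑ d ∈ D, β e' d * g e' ^ d)
    ∧ ∑ e, f e * ∑ d ∈ D, α e d * f e ^ d
        ≤ ∑ e, g e * ∑ d ∈ D, β e d * g e ^ d := by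
  have hfpos : ∃ e, 0 < f e := by
    by_contra h
    push_neg at h
    have : ∑ e, f e ≤ 0 := Finset.sum_nonpos fun e _ => h e
    linarith
  have hgpos : ∃ e, 0 < g e := by
    by_contra h
    push_neg at h
    have : ∑ e, g e ≤ 0 := Finset.sum_nonpos fun e _ => h e
    linarith
  have hkey : ∃ e0, 0 < g e0 ∧ f e0 ≤ g e0 := by
    by_contra h
    push_neg at h
    obtain ⟨e1, he1⟩ := hgpos
    have hlt : ∑ e, g e < ∑ e, f e := by
      refine Finset.sum_lt_sum (fun e _ => ?_) ⟨e1, Finset.mem_univ e1, h e1 he1⟩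
      rcases (hg e).lt_or_eq with h' | h'
      · exact (h e h').le
      · rw [← h']; exact hf e
    linarith
  have hmono : ∀ e0, f e0 ≤ g e0 →
      (∑ d ∈ D, α e0 d * f e0 ^ d) ≤ ∑ d ∈ D, β e0 d * g e0 ^ d := by
    intro e0 hfg
    refine Finset.sum_le_sum fun d _ => ?_
    exact mul_le_mul (hle e0 d) (pow_le_pow_left₀ (hf e0) hfg d)
      (pow_nonneg (hf e0) d) (le_trans (hα e0 d) (hle e0 d))
  obtain ⟨e0, hg0, hfg0⟩ := hkey
  have part1 : ∀ e e', 0 < f e → 0 < g e' →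
      ∑ d ∈ D, α e d * f e ^ d ≤ ∑ d ∈ D, β e' d * g e' ^ d :=
    fun e e' hfe hge' =>
      le_trans (hfNash e hfe e0) (le_trans (hmono e0 hfg0) (hgNash e0 hg0 e'))
  refine ⟨part1, ?_⟩
  obtain ⟨ef, hef⟩ := hfpos
  obtain ⟨eg, heg⟩ := hgpos
  have hfsum : ∑ e, f e * ∑ d ∈ D, α e d * f e ^ d
      = r * ∑ d ∈ D, α ef d * f ef ^ d := by
    have : ∑ e, f e * ∑ d ∈ D, α e d * f e ^ d
        = ∑ e, f e * ∑ d ∈ D, α ef d * f ef ^ d := by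
      refine Finset.sum_congr rfl fun e _ => ?_
      rcases (hf e).lt_or_eq with h' | h'
      · rw [le_antisymm (hfNash e h' ef) (hfNash ef hef e)]
      · rw [← h', zero_mul, zero_mul]
    rw [this, ← Finset.sum_mul, hfr]
  have hgsum : ∑ e, g e * ∑ d ∈ D, β e d * g e ^ d
      = r * ∑ d ∈ D, β eg d * g eg ^ d := by
    have : ∑ e, g e * ∑ d ∈ D, β e d * g e ^ d
        = ∑ e, g e * ∑ d ∈ D, β eg d * g eg ^ d := by
      refine Finset.sum_congr rfl fun e _ => ?_
      rcases (hg e).lt_or_eq with h' | h'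
      · rw [le_antisymm (hgNash e h' eg) (hgNash eg heg e)]
      · rw [← h', zero_mul, zero_mul]
    rw [this, ← Finset.sum_mul, hgr]
  rw [hfsum, hgsum]
  exact mul_le_mul_of_nonneg_left (part1 ef eg hef heg) hr.le
end

section
/- Lipschitz bound for Nash total latency in coefficients: for a parallel congestion game with edge set E, degrees 𝒟 ∋ 0,1, unit demand, and coefficient vectors restricted to a box with lower corner ǎ (ǎ_{e,0}, ǎ_{e,1} > 0) and upper corner â, the Nash total latency L^{nf} satisfies, for any two admissible coefficient vectors a, b: L^{nf}(a) − L^{nf}(b) ≤ (|𝒟| + ((ρ⁺ − ρ₀⁻)/(2ρ₁⁻))(|E| + |𝒟| − 1)) · ‖a − b‖₂, where ρ₀⁻ = min_e ǎ_{e,0}, ρ₁⁻ = min_e ǎ_{e,1}, and ρ⁺ = max_e Σ_{d∈𝒟} (d+1) â_{e,d}. -/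
open Finset

/-- Lipschitz-type bound for the Nash total latency as a function of
the latency coefficients, for coefficient vectors in the box `[aLo, aHi]` with
`aLo_{e,0}, aLo_{e,1} > 0`, unit demand.  If `fa` and `fb` are Nash flows for
coefficients `a` and `b` respectively, then
`L^{nf}(a) − L^{nf}(b) ≤ (|𝒟| + ((ρ⁺−ρ₀⁻)/(2ρ₁⁻))(|E|+|𝒟|−1)) ‖a−b‖₂`. -/
theorem stmt12 {E : Type*} [Fintype E] [Nonempty E] (D : Finset ℕ)
    (h0D : 0 ∈ D) (h1D : 1 ∈ D)
    (aLo aHi : E → ℕ → ℝ)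
    (hbox : ∀ e d, d ∈ D → 0 ≤ aLo e d ∧ aLo e d ≤ aHi e d)
    (h0pos : ∀ e, 0 < aLo e 0) (h1pos : ∀ e, 0 < aLo e 1)
    (a b : E → ℕ → ℝ)
    (haA : ∀ e d, d ∈ D → aLo e d ≤ a e d ∧ a e d ≤ aHi e d)
    (hbA : ∀ e d, d ∈ D → aLo e d ≤ b e d ∧ b e d ≤ aHi e d)
    (fa fb : E → ℝ)
    (hfann : ∀ e, 0 ≤ fa e) (hfar : ∑ e, fa e = 1)
    (hfaNash : ∀ e, 0 < fa e → ∀ e',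
      ∑ d ∈ D, a e d * fa e ^ d ≤ ∑ d ∈ D, a e' d * fa e' ^ d)
    (hfbnn : ∀ e, 0 ≤ fb e) (hfbr : ∑ e, fb e = 1)
    (hfbNash : ∀ e, 0 < fb e → ∀ e',
      ∑ d ∈ D, b e d * fb e ^ d ≤ ∑ d ∈ D, b e' d * fb e' ^ d) :
    (∑ e, fa e * ∑ d ∈ D, a e d * fa e ^ d)
      - (∑ e, fb e * ∑ d ∈ D, b e d * fb e ^ d)
    ≤ ((D.card : ℝ)
        + ((⨆ e, ∑ d ∈ D, ((d : ℝ) + 1) * aHi e d) - (⨅ e, aLo e 0)) / (2 * ⨅ e, aLo e 1)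
          * ((Fintype.card E : ℝ) + (D.card : ℝ) - 1))
      * Real.sqrt (∑ e, ∑ d ∈ D, (a e d - b e d) ^ 2) := by
  set N := Real.sqrt (∑ e, ∑ d ∈ D, (a e d - b e d) ^ 2) with hN
  have hNnn : 0 ≤ N := Real.sqrt_nonneg _
  -- existence of an edge e* with fb e* > 0 and fa e* ≤ fb e*
  have hexists : ∃ e, 0 < fb e ∧ fa e ≤ fb e := by
    by_contra h
    push_neg at h
    have hle : ∀ e ∈ Finset.univ, fb e ≤ fa e := by
      intro e _
      rcases eq_or_lt_of_le (hfbnn e) with h0 | h0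
      · rw [← h0]; exact hfann e
      · exact (h e h0).le
    have hne : ∃ e, 0 < fb e := by
      by_contra h2
      push_neg at h2
      have h3 : ∑ e, fb e = 0 :=
        Finset.sum_eq_zero (fun e _ => le_antisymm (h2 e) (hfbnn e))
      rw [hfbr] at h3; norm_num at h3
    obtain ⟨e0, he0⟩ := hne
    have hlt : ∑ e, fb e < ∑ e, fa e :=
      Finset.sum_lt_sum hle ⟨e0, Finset.mem_univ e0, h e0 he0⟩
    rw [hfar, hfbr] at hlt; exact lt_irrefl _ hlt
  obtain ⟨es, hespos, hesle⟩ := hexists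
  have hfa1 : ∀ e, fa e ≤ 1 := by
    intro e
    calc fa e ≤ ∑ e, fa e := Finset.single_le_sum (fun e _ => hfann e) (Finset.mem_univ e)
    _ = 1 := hfar
  -- L(a) ≤ latency of es under a at fa
  have hLa : (∑ e, fa e * ∑ d ∈ D, a e d * fa e ^ d) ≤ ∑ d ∈ D, a es d * fa es ^ d := by
    calc (∑ e, fa e * ∑ d ∈ D, a e d * fa e ^ d)
        ≤ ∑ e, fa e * ∑ d ∈ D, a es d * fa es ^ d := by
          apply Finset.sum_le_sum
          intro e _
          rcases eq_or_lt_of_le (hfann e) with h0 | h0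
          · rw [← h0]; simp
          · exact mul_le_mul_of_nonneg_left (hfaNash e h0 es) (hfann e)
      _ = (∑ e, fa e) * (∑ d ∈ D, a es d * fa es ^ d) := by rw [Finset.sum_mul]
      _ = ∑ d ∈ D, a es d * fa es ^ d := by rw [hfar, one_mul]
  -- latency of es under b at fb ≤ L(b)
  have hLb : (∑ d ∈ D, b es d * fb es ^ d) ≤ ∑ e, fb e * ∑ d ∈ D, b e d * fb e ^ d := by
    calc (∑ d ∈ D, b es d * fb es ^ d)
        = (∑ e, fb e) * (∑ d ∈ D, b es d * fb es ^ d) := by rw [hfbr, one_mul]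
      _ = ∑ e, fb e * ∑ d ∈ D, b es d * fb es ^ d := by rw [Finset.sum_mul]
      _ ≤ ∑ e, fb e * ∑ d ∈ D, b e d * fb e ^ d := by
          apply Finset.sum_le_sum
          intro e _
          exact mul_le_mul_of_nonneg_left (hfbNash es hespos e) (hfbnn e)
  -- monotonicity of the b-latency on es
  have hmono : (∑ d ∈ D, b es d * fa es ^ d) ≤ ∑ d ∈ D, b es d * fb es ^ d := by
    apply Finset.sum_le_sum
    intro d hd
    have hbnn : 0 ≤ b es d := le_trans (hbox es d hd).1 (hbA es d hd).1
    exact mul_le_mul_of_nonneg_left (pow_le_pow_left₀ (hfann es) hesle d) hbnn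
  -- pointwise bound on the coefficient difference
  have hterm : ∀ d ∈ D, a es d * fa es ^ d - b es d * fa es ^ d ≤ N := by
    intro d hd
    have hsq : (a es d - b es d) ^ 2 ≤ ∑ e, ∑ d ∈ D, (a e d - b e d) ^ 2 := by
      calc (a es d - b es d) ^ 2
          ≤ ∑ d ∈ D, (a es d - b es d) ^ 2 :=
            Finset.single_le_sum (f := fun d : ℕ => (a es d - b es d) ^ 2) (fun d _ => sq_nonneg _) hd
        _ ≤ ∑ e, ∑ d ∈ D, (a e d - b e d) ^ 2 :=
            Finset.single_le_sum (f := fun e => ∑ d ∈ D, (a e d - b e d) ^ 2)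
              (fun e _ => Finset.sum_nonneg (fun d _ => sq_nonneg _)) (Finset.mem_univ es)
    have habs : |a es d - b es d| ≤ N := by
      rw [hN, ← Real.sqrt_sq_eq_abs]
      exact Real.sqrt_le_sqrt hsq
    have hpow0 : (0:ℝ) ≤ fa es ^ d := pow_nonneg (hfann es) d
    have hpow1 : fa es ^ d ≤ 1 := pow_le_one₀ (hfann es) (hfa1 es)
    calc a es d * fa es ^ d - b es d * fa es ^ d
        = (a es d - b es d) * fa es ^ d := by ring
      _ ≤ |a es d - b es d| * fa es ^ d :=
          mul_le_mul_of_nonneg_right (le_abs_self _) hpow0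
      _ ≤ |a es d - b es d| * 1 :=
          mul_le_mul_of_nonneg_left hpow1 (abs_nonneg _)
      _ = |a es d - b es d| := mul_one _
      _ ≤ N := habs
  have hmain : (∑ e, fa e * ∑ d ∈ D, a e d * fa e ^ d)
      - (∑ e, fb e * ∑ d ∈ D, b e d * fb e ^ d) ≤ (D.card : ℝ) * N := by
    have h1 : (∑ d ∈ D, a es d * fa es ^ d) - (∑ d ∈ D, b es d * fa es ^ d)
        ≤ (D.card : ℝ) * N := by
      rw [← Finset.sum_sub_distrib]
      calc (∑ d ∈ D, (a es d * fa es ^ d - b es d * fa es ^ d))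
          ≤ ∑ _d ∈ D, N := Finset.sum_le_sum hterm
        _ = (D.card : ℝ) * N := by rw [Finset.sum_const, nsmul_eq_mul]
    linarith [hLa, hLb, hmono]
  -- the extra constant is nonnegative
  have hinf1pos : 0 < ⨅ e, aLo e 1 := by
    obtain ⟨e0, _, he0⟩ := Finset.exists_min_image Finset.univ (fun e => aLo e 1)
      Finset.univ_nonempty
    have heq : (⨅ e, aLo e 1) = aLo e0 1 :=
      le_antisymm (ciInf_le (Finite.bddBelow_range _) e0)
        (le_ciInf (fun e => he0 e (Finset.mem_univ e)))
    rw [heq]; exact h1pos e0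
  have hsupge : (⨅ e, aLo e 0) ≤ ⨆ e, ∑ d ∈ D, ((d : ℝ) + 1) * aHi e d := by
    obtain ⟨e⟩ := ‹Nonempty E›
    calc (⨅ e, aLo e 0) ≤ aLo e 0 := ciInf_le (Finite.bddBelow_range _) e
      _ ≤ aHi e 0 := (hbox e 0 h0D).2
      _ = ((0:ℕ) + 1 : ℝ) * aHi e 0 := by norm_num
      _ ≤ ∑ d ∈ D, ((d : ℝ) + 1) * aHi e d := by
          apply Finset.single_le_sum (f := fun d : ℕ => ((d : ℝ) + 1) * aHi e d) _ h0D
          intro d hd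
          have : (0:ℝ) ≤ aHi e d := le_trans (hbox e d hd).1 (hbox e d hd).2
          positivity
      _ ≤ ⨆ e, ∑ d ∈ D, ((d : ℝ) + 1) * aHi e d := le_ciSup (f := fun e => ∑ d ∈ D, ((d : ℝ) + 1) * aHi e d) (Finite.bddAbove_range _) e
  have hcardE : (1:ℝ) ≤ (Fintype.card E : ℝ) := by
    exact_mod_cast Fintype.card_pos
  have hcardD : (1:ℝ) ≤ (D.card : ℝ) := by
    exact_mod_cast Finset.card_pos.mpr ⟨0, h0D⟩
  have hC2 : 0 ≤ ((⨆ e, ∑ d ∈ D, ((d : ℝ) + 1) * aHi e d) - (⨅ e, aLo e 0))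
      / (2 * ⨅ e, aLo e 1) * ((Fintype.card E : ℝ) + (D.card : ℝ) - 1) := by
    apply mul_nonneg
    · apply div_nonneg (by linarith) (by linarith)
    · linarith
  calc (∑ e, fa e * ∑ d ∈ D, a e d * fa e ^ d)
      - (∑ e, fb e * ∑ d ∈ D, b e d * fb e ^ d)
      ≤ (D.card : ℝ) * N := hmain
    _ ≤ ((D.card : ℝ)
        + ((⨆ e, ∑ d ∈ D, ((d : ℝ) + 1) * aHi e d) - (⨅ e, aLo e 0)) / (2 * ⨅ e, aLo e 1)
          * ((Fintype.card E : ℝ) + (D.card : ℝ) - 1)) * N := by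
        apply mul_le_mul_of_nonneg_right _ hNnn
        linarith
end

section
/- Lipschitz bound for optimal total latency: under the same setting with marginal-cost tolls inducing the socially optimal flow, the optimal total latency L*(a) = min_f Σ_e f_e ℓ_e^a(f_e) (over unit-demand flows) satisfies L*(a) − L*(b) ≤ (|𝒟| + ((ρ⁺ − ρ₀⁻)/(4ρ₁⁻))(|E| + Σ_{d∈𝒟∖{0}} (d+1)^d)) · ‖a − b‖₂ for all admissible coefficient vectors a, b in the box [ǎ, â]. -/
open Finset

/-- Lipschitz-type bound for the optimal (marginal-cost tolled) total
latency in the coefficients: if `fa` minimizes the total latency over unit-demand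
flows for coefficients `a`, and `fb` likewise for `b`, with both coefficient vectors
in the box `[aLo, aHi]` (`aLo_{e,0}, aLo_{e,1} > 0`), then
`L*(a) − L*(b) ≤ (|𝒟| + ((ρ⁺−ρ₀⁻)/(4ρ₁⁻))(|E| + ∑_{d∈𝒟∖{0}} (d+1)^d)) ‖a−b‖₂`. -/
theorem stmt13 {E : Type*} [Fintype E] [Nonempty E] (D : Finset ℕ)
    (h0D : 0 ∈ D) (h1D : 1 ∈ D)
    (aLo aHi : E → ℕ → ℝ)
    (hbox : ∀ e d, d ∈ D → 0 ≤ aLo e d ∧ aLo e d ≤ aHi e d)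
    (h0pos : ∀ e, 0 < aLo e 0) (h1pos : ∀ e, 0 < aLo e 1)
    (a b : E → ℕ → ℝ)
    (haA : ∀ e d, d ∈ D → aLo e d ≤ a e d ∧ a e d ≤ aHi e d)
    (hbA : ∀ e d, d ∈ D → aLo e d ≤ b e d ∧ b e d ≤ aHi e d)
    (fa fb : E → ℝ)
    (hfann : ∀ e, 0 ≤ fa e) (hfar : ∑ e, fa e = 1)
    (hfaOpt : ∀ g : E → ℝ, (∀ e, 0 ≤ g e) → (∑ e, g e = 1) →
      ∑ e, fa e * ∑ d ∈ D, a e d * fa e ^ d ≤ ∑ e, g e * ∑ d ∈ D, a e d * g e ^ d)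
    (hfbnn : ∀ e, 0 ≤ fb e) (hfbr : ∑ e, fb e = 1)
    (hfbOpt : ∀ g : E → ℝ, (∀ e, 0 ≤ g e) → (∑ e, g e = 1) →
      ∑ e, fb e * ∑ d ∈ D, b e d * fb e ^ d ≤ ∑ e, g e * ∑ d ∈ D, b e d * g e ^ d) :
    (∑ e, fa e * ∑ d ∈ D, a e d * fa e ^ d)
      - (∑ e, fb e * ∑ d ∈ D, b e d * fb e ^ d)
    ≤ ((D.card : ℝ)
        + ((⨆ e, ∑ d ∈ D, ((d : ℝ) + 1) * aHi e d) - (⨅ e, aLo e 0))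
            / (4 * ⨅ e, aLo e 1)
          * ((Fintype.card E : ℝ) + ∑ d ∈ D.erase 0, ((d : ℝ) + 1) ^ d))
      * Real.sqrt (∑ e, ∑ d ∈ D, (a e d - b e d) ^ 2) := by

  set S := Real.sqrt (∑ e, ∑ d ∈ D, (a e d - b e d) ^ 2) with hS
  have hSnn : 0 ≤ S := Real.sqrt_nonneg _
  have hfb1 : ∀ e, fb e ≤ 1 := by
    intro e
    calc fb e ≤ ∑ e', fb e' :=
          Finset.single_le_sum (fun i _ => hfbnn i) (Finset.mem_univ e)
      _ = 1 := hfbr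
  have habS : ∀ e d, d ∈ D → |a e d - b e d| ≤ S := by
    intro e d hd
    rw [← Real.sqrt_sq_eq_abs]
    apply Real.sqrt_le_sqrt
    calc (a e d - b e d) ^ 2 ≤ ∑ d' ∈ D, (a e d' - b e d') ^ 2 :=
          Finset.single_le_sum (f := fun d' => (a e d' - b e d') ^ 2)
            (fun i _ => sq_nonneg _) hd
      _ ≤ ∑ e', ∑ d' ∈ D, (a e' d' - b e' d') ^ 2 :=
          Finset.single_le_sum (f := fun e' => ∑ d' ∈ D, (a e' d' - b e' d') ^ 2)
            (fun i _ => Finset.sum_nonneg fun _ _ => sq_nonneg _) (Finset.mem_univ e)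
  have key : (∑ e, fa e * ∑ d ∈ D, a e d * fa e ^ d)
      - (∑ e, fb e * ∑ d ∈ D, b e d * fb e ^ d) ≤ (D.card : ℝ) * S := by
    have h1 := hfaOpt fb hfbnn hfbr
    have h2 : (∑ e, fb e * ∑ d ∈ D, a e d * fb e ^ d)
        - (∑ e, fb e * ∑ d ∈ D, b e d * fb e ^ d)
        = ∑ e, fb e * ∑ d ∈ D, (a e d - b e d) * fb e ^ d := by
      rw [← Finset.sum_sub_distrib]
      refine Finset.sum_congr rfl fun e _ => ?_
      rw [← mul_sub, ← Finset.sum_sub_distrib]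
      congr 1
      refine Finset.sum_congr rfl fun d _ => ?_
      ring
    have h3 : ∑ e, fb e * ∑ d ∈ D, (a e d - b e d) * fb e ^ d ≤ (D.card : ℝ) * S := by
      calc ∑ e, fb e * ∑ d ∈ D, (a e d - b e d) * fb e ^ d
          ≤ ∑ e, fb e * ((D.card : ℝ) * S) := by
            refine Finset.sum_le_sum fun e _ => ?_
            refine mul_le_mul_of_nonneg_left ?_ (hfbnn e)
            calc ∑ d ∈ D, (a e d - b e d) * fb e ^ d ≤ ∑ d ∈ D, S := by
                  refine Finset.sum_le_sum fun d hd => ?_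
                  calc (a e d - b e d) * fb e ^ d ≤ |a e d - b e d| * fb e ^ d :=
                        mul_le_mul_of_nonneg_right (le_abs_self _) (pow_nonneg (hfbnn e) d)
                    _ ≤ |a e d - b e d| * 1 :=
                        mul_le_mul_of_nonneg_left (pow_le_one₀ (hfbnn e) (hfb1 e)) (abs_nonneg _)
                    _ = |a e d - b e d| := mul_one _
                    _ ≤ S := habS e d hd
              _ = (D.card : ℝ) * S := by rw [Finset.sum_const, nsmul_eq_mul]
        _ = (∑ e, fb e) * ((D.card : ℝ) * S) := by rw [Finset.sum_mul]
        _ = (D.card : ℝ) * S := by rw [hfbr, one_mul]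
    calc (∑ e, fa e * ∑ d ∈ D, a e d * fa e ^ d)
        - (∑ e, fb e * ∑ d ∈ D, b e d * fb e ^ d)
        ≤ (∑ e, fb e * ∑ d ∈ D, a e d * fb e ^ d)
          - (∑ e, fb e * ∑ d ∈ D, b e d * fb e ^ d) := by linarith
      _ = _ := h2
      _ ≤ _ := h3
  -- constant comparison
  have hHinn : ∀ e d, d ∈ D → 0 ≤ aHi e d := fun e d hd =>
    (hbox e d hd).1.trans (hbox e d hd).2
  obtain ⟨e1, he1⟩ := exists_eq_ciInf_of_finite (f := fun e => aLo e 1)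
  have hInf1pos : 0 < ⨅ e, aLo e 1 := he1 ▸ h1pos e1
  obtain ⟨e0, he0⟩ := exists_eq_ciInf_of_finite (f := fun e => aLo e 0)
  have hsup_sub : (0:ℝ) ≤ (⨆ e, ∑ d ∈ D, ((d : ℝ) + 1) * aHi e d) - (⨅ e, aLo e 0) := by
    have h1 : (⨅ e, aLo e 0) = aLo e0 0 := he0.symm
    have h2 : aLo e0 0 ≤ ∑ d ∈ D, ((d : ℝ) + 1) * aHi e0 d := by
      have h5 := Finset.single_le_sum (f := fun (d : ℕ) => ((d : ℝ) + 1) * aHi e0 d)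
        (fun d hd => mul_nonneg (by positivity) (hHinn e0 d hd)) h0D
      simp only [Nat.cast_zero, zero_add, one_mul] at h5
      have h6 := (hbox e0 0 h0D).2
      linarith
    have h3 : ∑ d ∈ D, ((d : ℝ) + 1) * aHi e0 d ≤ ⨆ e, ∑ d ∈ D, ((d : ℝ) + 1) * aHi e d :=
      le_ciSup (f := fun e => ∑ d ∈ D, ((d : ℝ) + 1) * aHi e d)
        (Set.Finite.bddAbove (Set.finite_range _)) e0
    linarith
  have hextra : (0:ℝ) ≤ ((⨆ e, ∑ d ∈ D, ((d : ℝ) + 1) * aHi e d) - (⨅ e, aLo e 0))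
      / (4 * ⨅ e, aLo e 1)
      * ((Fintype.card E : ℝ) + ∑ d ∈ D.erase 0, ((d : ℝ) + 1) ^ d) := by
    apply mul_nonneg
    · exact div_nonneg hsup_sub (by linarith)
    · have : (0:ℝ) ≤ ∑ d ∈ D.erase 0, ((d : ℝ) + 1) ^ d :=
        Finset.sum_nonneg fun d _ => pow_nonneg (by positivity) d
      have h4 : (0:ℝ) ≤ (Fintype.card E : ℝ) := Nat.cast_nonneg _
      linarith
  calc (∑ e, fa e * ∑ d ∈ D, a e d * fa e ^ d)
      - (∑ e, fb e * ∑ d ∈ D, b e d * fb e ^ d)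
      ≤ (D.card : ℝ) * S := key
    _ ≤ ((D.card : ℝ)
        + ((⨆ e, ∑ d ∈ D, ((d : ℝ) + 1) * aHi e d) - (⨅ e, aLo e 0))
            / (4 * ⨅ e, aLo e 1)
          * ((Fintype.card E : ℝ) + ∑ d ∈ D.erase 0, ((d : ℝ) + 1) ^ d)) * S := by
      apply mul_le_mul_of_nonneg_right _ hSnn
      linarith
end

section
/- Non-negativity of the benefit of signalling under optimal tolls: since the optimal total latency L*(a) = min_f L(f;a) is concave in the coefficient vector a (as a minimum of functions linear in a), Jensen's inequality gives L*(E[α]) ≥ Σ_i p_i L*(E[α | α ∈ π_i]) for any signalling policy π partitioning the support of α. Hence when the signal-aware marginal-cost incentive mechanism is used, revealing information never increases expected total latency: G(π; μ_0, T*) ≥ 0. -/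
open Finset

/-- non-negativity of the benefit of signalling under the optimal
signal-aware (marginal-cost) incentive mechanism.  With signal probabilities `p i`
and conditional expected coefficients `ᾱ i` (so that, by the law of total
expectation, `E[α] = ∑ i, p i • ᾱ i`), if the realized flow after each signal
achieves the optimal total latency `L*(ᾱ i)` and the no-information flow achieves
`L*(E[α])`, then `G(π; μ₀, T*) = L*(E[α]) − ∑ i, p i · L*(ᾱ i) ≥ 0`. -/
theorem stmt14 {E : Type*} [Fintype E] (D : Finset ℕ)
    (m : ℕ) (p : Fin m → ℝ) (hp : ∀ i, 0 < p i) (hps : ∑ i, p i = 1)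
    (ᾱ : Fin m → E → ℕ → ℝ) (hᾱnn : ∀ i e d, 0 ≤ ᾱ i e d)
    (ᾱ0 : E → ℕ → ℝ) (htotal : ∀ e d, ᾱ0 e d = ∑ i, p i * ᾱ i e d)
    -- the flow after signal `i` is optimal for the posterior coefficients `ᾱ i`
    (f : Fin m → E → ℝ)
    (hfnn : ∀ i e, 0 ≤ f i e) (hfr : ∀ i, ∑ e, f i e = 1)
    (hfOpt : ∀ i, ∀ g : E → ℝ, (∀ e, 0 ≤ g e) → (∑ e, g e = 1) →
      ∑ e, f i e * ∑ d ∈ D, ᾱ i e d * (f i e) ^ d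
        ≤ ∑ e, g e * ∑ d ∈ D, ᾱ i e d * g e ^ d)
    -- the no-information flow is optimal for the prior expected coefficients
    (f0 : E → ℝ) (hf0nn : ∀ e, 0 ≤ f0 e) (hf0r : ∑ e, f0 e = 1)
    (hf0Opt : ∀ g : E → ℝ, (∀ e, 0 ≤ g e) → (∑ e, g e = 1) →
      ∑ e, f0 e * ∑ d ∈ D, ᾱ0 e d * f0 e ^ d
        ≤ ∑ e, g e * ∑ d ∈ D, ᾱ0 e d * g e ^ d) :
    0 ≤ (∑ e, f0 e * ∑ d ∈ D, ᾱ0 e d * f0 e ^ d)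
        - ∑ i, p i * (∑ e, f i e * ∑ d ∈ D, ᾱ i e d * (f i e) ^ d) := by
  have key : ∑ e, f0 e * ∑ d ∈ D, ᾱ0 e d * f0 e ^ d
      = ∑ i, p i * (∑ e, f0 e * ∑ d ∈ D, ᾱ i e d * f0 e ^ d) := by
    simp only [htotal, Finset.sum_mul, Finset.mul_sum]
    calc ∑ e : E, ∑ d ∈ D, ∑ i : Fin m, f0 e * (p i * ᾱ i e d * f0 e ^ d)
        = ∑ e : E, ∑ i : Fin m, ∑ d ∈ D, f0 e * (p i * ᾱ i e d * f0 e ^ d) :=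
          Finset.sum_congr rfl fun e _ => Finset.sum_comm
      _ = ∑ i : Fin m, ∑ e : E, ∑ d ∈ D, f0 e * (p i * ᾱ i e d * f0 e ^ d) :=
          Finset.sum_comm
      _ = ∑ i : Fin m, ∑ e : E, ∑ d ∈ D, p i * (f0 e * (ᾱ i e d * f0 e ^ d)) := by
          refine Finset.sum_congr rfl fun i _ => Finset.sum_congr rfl fun e _ =>
            Finset.sum_congr rfl fun d _ => by ring
  rw [sub_nonneg, key]
  apply Finset.sum_le_sum
  intro i _
  exact mul_le_mul_of_nonneg_left (hfOpt i f0 hf0nn hf0r) (hp i).le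
end
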